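/- For each m ≥ 1, the rational function H_m(y) = [x^m] (xy/√Δ(x,y)) satisfies H_m(1/y) = −y^{m−2} H_m(y). -/

import Mathlib

open scoped nonZeroDivisors

/-- Substitution `y ↦ 1/y` on rational functions of `y`. -/
noncomputable def invSubst : RatFunc ℚ → RatFunc ℚ :=
  RatFunc.eval (algebraMap ℚ (RatFunc ℚ)) (RatFunc.X)⁻¹

/-- `Δ(x,y) = 1−2x−2y−2xy+x²+y²`, as a power series in `x` with coefficients
rational functions of `y`. -/
noncomputable def DeltaSeries : PowerSeries (RatFunc ℚ) :=
  PowerSeries.C (R := RatFunc ℚ) ((1 - RatFunc.X)^2) +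
    PowerSeries.C (R := RatFunc ℚ) (-2 - 2*RatFunc.X) * PowerSeries.X +
    PowerSeries.X^2

noncomputable def phiRH : Polynomial ℚ →+* RatFunc ℚ :=
  (Polynomial.aeval ((RatFunc.X : RatFunc ℚ)⁻¹)).toRingHom

lemma transX : Transcendental ℚ (RatFunc.X : RatFunc ℚ) := by
  rw [← RatFunc.algebraMap_X]
  exact (transcendental_algebraMap_iff (IsFractionRing.injective (Polynomial ℚ) (RatFunc ℚ))).2
    (Polynomial.transcendental_X ℚ)

lemma transXinv : Transcendental ℚ ((RatFunc.X : RatFunc ℚ)⁻¹) := by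
  intro h; apply transX; simpa using h.inv

lemma hphiRH : (Polynomial ℚ)⁰ ≤ (RatFunc ℚ)⁰.comap phiRH := by
  intro p hp
  simp only [Submonoid.mem_comap]
  rw [mem_nonZeroDivisors_iff_ne_zero] at hp ⊢
  intro h0
  exact transXinv ⟨p, hp, h0⟩

noncomputable def sigmaRH : RatFunc ℚ →+* RatFunc ℚ := RatFunc.liftRingHom phiRH hphiRH

lemma sigma_X : sigmaRH RatFunc.X = (RatFunc.X : RatFunc ℚ)⁻¹ := by
  rw [sigmaRH, RatFunc.liftRingHom_apply]
  simp [phiRH]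

lemma invSubst_eq (r : RatFunc ℚ) : invSubst r = sigmaRH r := by
  rw [invSubst, sigmaRH, RatFunc.liftRingHom_apply, RatFunc.eval]
  simp [phiRH, Polynomial.aeval_def]

open PowerSeries in
/-- For each `m ≥ 1`, the coefficient `H_m(y) = [xᵐ](xy/√Δ(x,y))` satisfies
`H_m(1/y) = −y^{m−2} H_m(y)`. -/
theorem directed_convex_coefficients_self_reciprocal
    (S : PowerSeries (RatFunc ℚ))
    (hS2 : S ^ 2 = DeltaSeries)
    (hS0 : PowerSeries.constantCoeff (R := RatFunc ℚ) S = 1 - RatFunc.X)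
    (G : PowerSeries (RatFunc ℚ))
    (hG : G = PowerSeries.C (R := RatFunc ℚ) RatFunc.X * PowerSeries.X * S⁻¹) :
    ∀ m : ℕ, 1 ≤ m →
      invSubst (PowerSeries.coeff (R := RatFunc ℚ) m G) =
        - (RatFunc.X ^ ((m : ℤ) - 2)) * PowerSeries.coeff (R := RatFunc ℚ) m G := by
  haveI : CharZero (RatFunc ℚ) :=
    charZero_of_injective_algebraMap (algebraMap ℚ (RatFunc ℚ)).injective
  set y : RatFunc ℚ := RatFunc.X with hy_def
  have hy0 : y ≠ 0 := RatFunc.X_ne_zero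
  have hσy : sigmaRH y = y⁻¹ := by rw [hy_def]; exact sigma_X
  have hy1 : (1 : RatFunc ℚ) - y ≠ 0 := by
    intro h
    apply transX
    refine ⟨Polynomial.X - Polynomial.C 1, Polynomial.X_sub_C_ne_zero 1, ?_⟩
    simp only [map_sub, Polynomial.aeval_X, Polynomial.aeval_C, map_one]
    rw [← hy_def]
    linear_combination -h
  have hcoef : ∀ n : ℕ, (PowerSeries.coeff (R := RatFunc ℚ) n) DeltaSeries =
      if n = 0 then (1-y)^2 else if n = 1 then (-2-2*y) else if n = 2 then 1 else 0 := by
    intro n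
    simp only [DeltaSeries, map_add, PowerSeries.coeff_C, PowerSeries.coeff_C_mul,
      PowerSeries.coeff_X, PowerSeries.coeff_X_pow, ← hy_def]
    rcases n with _|_|_|n <;> simp
  have hs1 : sigmaRH ((1 - y)^2) = y⁻¹^2 * ((1:RatFunc ℚ) - y)^2 := by
    rw [map_pow, map_sub, map_one, hσy]
    field_simp
    ring
  have hs2 : sigmaRH (-2 - 2*y) = y⁻¹ ^ 2 * (y * (-2 - 2*y)) := by
    have h : sigmaRH (-2 - 2 * y) = -2 - 2 * y⁻¹ := by
      simp only [map_sub, map_mul, map_neg, map_ofNat, hσy]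
    rw [h]; field_simp; ring
  have hDelta : PowerSeries.map sigmaRH DeltaSeries =
      PowerSeries.C (R := RatFunc ℚ) (y⁻¹^2) * PowerSeries.rescale y DeltaSeries := by
    ext n
    rw [PowerSeries.coeff_map, PowerSeries.coeff_C_mul, PowerSeries.coeff_rescale, hcoef]
    rcases n with _|_|_|n
    · simpa using hs1
    · simpa using hs2
    · norm_num
      field_simp
    · simp
  have ccmap : ∀ f : PowerSeries (RatFunc ℚ), PowerSeries.constantCoeff (R := RatFunc ℚ)
      (PowerSeries.map sigmaRH f) = sigmaRH (PowerSeries.constantCoeff (R := RatFunc ℚ) f) := by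
    intro f
    rw [← PowerSeries.coeff_zero_eq_constantCoeff, PowerSeries.coeff_map,
      PowerSeries.coeff_zero_eq_constantCoeff]
  have hScc : PowerSeries.constantCoeff (R := RatFunc ℚ) (PowerSeries.map sigmaRH S) = 1 - y⁻¹ := by
    rw [ccmap, hS0, map_sub, map_one, hσy]
  have hyinv1 : (1:RatFunc ℚ) - y⁻¹ ≠ 0 := by
    intro h
    apply hy1
    have h2 : y * (1 - y⁻¹) = y * 0 := by rw [h]
    rw [mul_sub, mul_one, mul_inv_cancel₀ hy0, mul_zero] at h2
    linear_combination -h2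
  have hSccne : PowerSeries.constantCoeff (R := RatFunc ℚ) (PowerSeries.map sigmaRH S) ≠ 0 := by
    rw [hScc]; exact hyinv1
  have hS0ne : PowerSeries.constantCoeff (R := RatFunc ℚ) S ≠ 0 := by rw [hS0]; exact hy1
  have hrescc : PowerSeries.constantCoeff (R := RatFunc ℚ) (PowerSeries.rescale y S) = 1 - y := by
    rw [← PowerSeries.coeff_zero_eq_constantCoeff, PowerSeries.coeff_rescale, pow_zero, one_mul,
      PowerSeries.coeff_zero_eq_constantCoeff, hS0]
  have key : PowerSeries.map sigmaRH S =
      -(PowerSeries.C (R := RatFunc ℚ) y⁻¹ * PowerSeries.rescale y S) := by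
    have h1 : (PowerSeries.map sigmaRH S)^2 =
        PowerSeries.C (R := RatFunc ℚ) (y⁻¹^2) * PowerSeries.rescale y DeltaSeries := by
      rw [← map_pow, hS2, hDelta]
    have h2 : (PowerSeries.C (R := RatFunc ℚ) y⁻¹ * PowerSeries.rescale y S)^2 =
        PowerSeries.C (R := RatFunc ℚ) (y⁻¹^2) * PowerSeries.rescale y DeltaSeries := by
      rw [mul_pow, ← map_pow, ← map_pow, hS2]
    have hsq : (PowerSeries.map sigmaRH S + (PowerSeries.C (R := RatFunc ℚ) y⁻¹ *
        PowerSeries.rescale y S)) * (PowerSeries.map sigmaRH S -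
        (PowerSeries.C (R := RatFunc ℚ) y⁻¹ * PowerSeries.rescale y S)) = 0 := by
      have h3 : (PowerSeries.map sigmaRH S + (PowerSeries.C (R := RatFunc ℚ) y⁻¹ *
          PowerSeries.rescale y S)) * (PowerSeries.map sigmaRH S -
          (PowerSeries.C (R := RatFunc ℚ) y⁻¹ * PowerSeries.rescale y S)) =
          (PowerSeries.map sigmaRH S)^2 -
          (PowerSeries.C (R := RatFunc ℚ) y⁻¹ * PowerSeries.rescale y S)^2 := by ring
      rw [h3, h1, h2, sub_self]
    rcases mul_eq_zero.mp hsq with h | h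
    · exact eq_neg_of_add_eq_zero_left h
    · exfalso
      have hAB := sub_eq_zero.mp h
      have hc := congrArg (PowerSeries.constantCoeff (R := RatFunc ℚ)) hAB
      rw [hScc, map_mul, PowerSeries.constantCoeff_C, hrescc] at hc
      apply hy1
      have h3 : y * ((1:RatFunc ℚ) - y⁻¹) = y * (y⁻¹ * (1 - y)) := by rw [hc]
      rw [mul_sub, mul_one, mul_inv_cancel₀ hy0, ← mul_assoc, mul_inv_cancel₀ hy0, one_mul] at h3
      have h4 : ((1:RatFunc ℚ) - y) + (1 - y) = 0 := by linear_combination -h3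
      exact add_self_eq_zero.mp h4
  have hinv : PowerSeries.map sigmaRH (S⁻¹) =
      -(PowerSeries.C (R := RatFunc ℚ) y * PowerSeries.rescale y (S⁻¹)) := by
    have ha : PowerSeries.map sigmaRH (S⁻¹) = (PowerSeries.map sigmaRH S)⁻¹ := by
      rw [PowerSeries.eq_inv_iff_mul_eq_one hSccne, ← map_mul,
        PowerSeries.inv_mul_cancel S hS0ne, map_one]
    have hb : -(PowerSeries.C (R := RatFunc ℚ) y * PowerSeries.rescale y (S⁻¹)) =
        (PowerSeries.map sigmaRH S)⁻¹ := by
      rw [PowerSeries.eq_inv_iff_mul_eq_one hSccne, key]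
      have h4 : -(PowerSeries.C (R := RatFunc ℚ) y * PowerSeries.rescale y (S⁻¹)) *
          -(PowerSeries.C (R := RatFunc ℚ) y⁻¹ * PowerSeries.rescale y S) =
          (PowerSeries.C (R := RatFunc ℚ) y * PowerSeries.C (R := RatFunc ℚ) y⁻¹) *
          (PowerSeries.rescale y (S⁻¹) * PowerSeries.rescale y S) := by ring
      rw [h4, ← map_mul, ← map_mul, PowerSeries.inv_mul_cancel S hS0ne,
        mul_inv_cancel₀ hy0, map_one, map_one, one_mul]
    rw [ha, ← hb]
  have hmapG : PowerSeries.map sigmaRH G =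
      -(PowerSeries.X * PowerSeries.rescale y (S⁻¹)) := by
    rw [hG]
    simp only [map_mul, PowerSeries.map_C, PowerSeries.map_X, hinv, hσy]
    have h5 : PowerSeries.C (R := RatFunc ℚ) y⁻¹ * PowerSeries.X *
        -(PowerSeries.C (R := RatFunc ℚ) y * PowerSeries.rescale y (S⁻¹)) =
        -((PowerSeries.C (R := RatFunc ℚ) y⁻¹ * PowerSeries.C (R := RatFunc ℚ) y) *
          (PowerSeries.X * PowerSeries.rescale y (S⁻¹))) := by ring
    rw [h5, ← map_mul, inv_mul_cancel₀ hy0, map_one, one_mul]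
  intro m hm
  obtain ⟨k, rfl⟩ : ∃ k, m = k + 1 := ⟨m - 1, by omega⟩
  have hcoeffG : PowerSeries.coeff (R := RatFunc ℚ) (k+1) G =
      y * PowerSeries.coeff (R := RatFunc ℚ) k (S⁻¹) := by
    rw [hG, mul_assoc, PowerSeries.coeff_C_mul, PowerSeries.coeff_succ_X_mul]
  have hzp : (y:RatFunc ℚ)^(((k+1:ℕ):ℤ)-2) * y = y^(k:ℕ) := by
    calc (y:RatFunc ℚ)^(((k+1:ℕ):ℤ)-2) * y = y^(((k+1:ℕ):ℤ)-2) * y^(1:ℤ) := by rw [zpow_one]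
      _ = y^(((k+1:ℕ):ℤ)-2+1) := (zpow_add₀ hy0 _ _).symm
      _ = y^((k:ℕ):ℤ) := by congr 1; push_cast; ring
      _ = y^(k:ℕ) := zpow_natCast y k
  rw [invSubst_eq, ← PowerSeries.coeff_map, hmapG, map_neg, PowerSeries.coeff_succ_X_mul,
    PowerSeries.coeff_rescale, hcoeffG]
  rw [show -(y:RatFunc ℚ) ^ (((k+1:ℕ):ℤ) - 2) * (y * PowerSeries.coeff (R := RatFunc ℚ) k S⁻¹) =
    -((y ^ (((k+1:ℕ):ℤ) - 2) * y) * PowerSeries.coeff (R := RatFunc ℚ) k S⁻¹) by ring, hzp]
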